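/- arXiv:1006.2694 — 2 statements merged into one kernel-verified Lean document; each statement's English description precedes it below -/
import Mathlib

section
/- Let D be a finite set, α > 0, C > 0, and for each i ∈ D let μ_i be a Borel measure on ℝ^d \ {0} satisfying μ_i({x : ‖x‖ ≥ s}) ≤ C s^{-α} for all s > 0. Let (Z_k)_{k ≤ 0} be D-valued random variables and (Π_{k+1})_{k ≤ 0} random d×d matrices, all on a common probability space, with Σ_{k=-∞}^0 E(‖Π_{k+1}‖^α) < ∞. Then for every Borel set K ⊆ ℝ^d with ε_K := inf{‖x‖ : x ∈ K} > 0, Σ_{k=-∞}^0 E(μ_{Z_k}({x : Π_{k+1} x ∈ K})) ≤ |D| · C · ε_K^{-α} · Σ_{k=-∞}^0 E(‖Π_{k+1}‖^α) < ∞; in particular, the measure μ_X(·) := Σ_{k=-∞}^0 E(μ_{Z_k}({x : Π_{k+1} x ∈ ·})) is finite on every Borel set bounded away from 0. -/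
open MeasureTheory ProbabilityTheory Filter Topology ENNReal

noncomputable section

/-- `ℝ^d` with the sup norm (the Pi norm on `Fin d → ℝ` is the sup norm). -/
abbrev Vec (d : ℕ) := Fin d → ℝ

/-- `d × d` real matrices. -/
abbrev Mat (d : ℕ) := Matrix (Fin d) (Fin d) ℝ

/-- The operator norm of a `d × d` matrix, induced by the sup norm on `ℝ^d`. -/
noncomputable def opNorm {d : ℕ} (M : Mat d) : ℝ :=
  ‖LinearMap.toContinuousLinearMap M.mulVecLin‖

/-- `a` is regularly varying of index `ρ`: `a t = t ^ ρ * L t` with `L` slowly varying. -/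
def RegVaryFun (a : ℝ → ℝ) (ρ : ℝ) : Prop :=
  ∃ L : ℝ → ℝ, Measurable L ∧ (∀ t > 0, 0 < L t) ∧
    (∀ lam > 0, Filter.Tendsto (fun t => L (lam * t) / L t) Filter.atTop (nhds 1)) ∧
    (∀ t > 0, a t = t ^ ρ * L t)

/-- A random vector `X` is regularly varying with index `α > 0`, normalizing function `a`
and associated measure of regular variation `ν`: `ν` is finite on Borel sets bounded away
from `0` and `n P(a_n⁻¹ X ∈ A) → ν A` for every Borel `ν`-continuity set `A` bounded away
from `0`. -/
def IsRegVar {Ω : Type*} [MeasurableSpace Ω] (P : Measure Ω) {d : ℕ}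
    (X : Ω → Vec d) (α : ℝ) (a : ℝ → ℝ) (ν : Measure (Vec d)) : Prop :=
  0 < α ∧ RegVaryFun a (1 / α) ∧
  (∀ A : Set (Vec d), MeasurableSet A → 0 ∉ closure A → ν A < ⊤) ∧
  ∀ A : Set (Vec d), MeasurableSet A → 0 ∉ closure A → ν (frontier A) = 0 →
    Filter.Tendsto (fun n : ℕ => (n : ℝ) * (P {ω | (a n)⁻¹ • X ω ∈ A}).toReal)
      Filter.atTop (nhds (ν A).toReal)

instance {d : ℕ} : MeasurableSpace (Mat d) :=
  (inferInstance : MeasurableSpace (Fin d → Fin d → ℝ))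

/-! If `M x ∈ K` then `ε_K ≤ ‖M‖ ‖x‖`, so `{x : M x ∈ K}` lies in the tail `{‖x‖ ≥ ε_K / ‖M‖}`
(or is empty when `M = 0`), whose `μᵢ`-mass is at most `C ε_K^{-α} ‖M‖^α` by the tail bound.
Integrating and summing over `k` gives the claim; the factor `|D| ≥ 1` only weakens it. -/

lemma sInf_norm_image_le {F : Type*} [SeminormedAddGroup F] {K : Set F} {y : F} (hy : y ∈ K) :
    sInf (norm '' K) ≤ ‖y‖ :=
  csInf_le ⟨0, by rintro r ⟨z, -, rfl⟩; exact norm_nonneg z⟩ ⟨y, hy, rfl⟩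

section TailBound

variable {E F : Type*} [NormedAddCommGroup E] [NormedSpace ℝ E]
  [NormedAddCommGroup F] [NormedSpace ℝ F]

lemma ContinuousLinearMap.preimage_subset_sInf_norm_le (f : E →L[ℝ] F) (K : Set F) :
    f ⁻¹' K ⊆ {x | sInf (norm '' K) ≤ ‖f‖ * ‖x‖} :=
  fun x hx => (sInf_norm_image_le (y := f x) hx).trans (f.le_opNorm x)

lemma measure_preimage_le_of_tail_bound [MeasurableSpace E] (ν : Measure E) {C α : ℝ}
    (hν : ∀ s : ℝ, 0 < s → ν {x | s ≤ ‖x‖} ≤ ENNReal.ofReal (C * s ^ (-α)))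
    (f : E →L[ℝ] F) {K : Set F} (hK : 0 < sInf (norm '' K)) :
    ν (f ⁻¹' K) ≤ ENNReal.ofReal (C * sInf (norm '' K) ^ (-α)) * ENNReal.ofReal (‖f‖ ^ α) := by
  set ε := sInf (norm '' K)
  have hsub := f.preimage_subset_sInf_norm_le K
  rcases (norm_nonneg f).eq_or_lt with hf | hf
  · have hempty : f ⁻¹' K = ∅ :=
      Set.eq_empty_of_forall_notMem fun x hx => by
        have : ε ≤ ‖f‖ * ‖x‖ := hsub hx
        rw [← hf, zero_mul] at this
        exact this.not_gt hK
    simp [hempty]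
  · calc ν (f ⁻¹' K)
        ≤ ν {x | ε / ‖f‖ ≤ ‖x‖} :=
          measure_mono fun x hx => (div_le_iff₀' hf).2 (hsub hx)
      _ ≤ ENNReal.ofReal (C * (ε / ‖f‖) ^ (-α)) := hν _ (div_pos hK hf)
      _ = ENNReal.ofReal (C * ε ^ (-α)) * ENNReal.ofReal (‖f‖ ^ α) := by
          rw [← ENNReal.ofReal_mul' (by positivity), Real.div_rpow hK.le hf.le,
            Real.rpow_neg hf.le, div_inv_eq_mul, mul_assoc]

end TailBound

theorem stmt8_general {Ω : Type*} [MeasurableSpace Ω] (P : Measure Ω)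
    {d : ℕ}
    {D : Type*} [Fintype D]
    (α C : ℝ)
    (μ : D → Measure (Vec d))
    (hμ : ∀ i : D, ∀ s : ℝ, 0 < s → μ i {x : Vec d | s ≤ ‖x‖} ≤ ENNReal.ofReal (C * s ^ (-α)))
    (Z : ℕ → Ω → D) (Pi : ℕ → Ω → Mat d)
    (hsum : ∑' k : ℕ, ∫⁻ ω, ENNReal.ofReal (opNorm (Pi k ω) ^ α) ∂P < ⊤)
    (K : Set (Vec d))
    (hεK : 0 < sInf (norm '' K)) :
    (∑' k : ℕ, ∫⁻ ω, μ (Z k ω) {x : Vec d | (Pi k ω).mulVec x ∈ K} ∂P ≤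
      (Fintype.card D : ℝ≥0∞) * ENNReal.ofReal (C * sInf (norm '' K) ^ (-α)) *
        ∑' k : ℕ, ∫⁻ ω, ENNReal.ofReal (opNorm (Pi k ω) ^ α) ∂P) ∧
    (Fintype.card D : ℝ≥0∞) * ENNReal.ofReal (C * sInf (norm '' K) ^ (-α)) *
        (∑' k : ℕ, ∫⁻ ω, ENNReal.ofReal (opNorm (Pi k ω) ^ α) ∂P) < ⊤ := by
  set c := (Fintype.card D : ℝ≥0∞) * ENNReal.ofReal (C * sInf (norm '' K) ^ (-α))
  have hc : c ≠ ⊤ := mul_ne_top (natCast_ne_top _) ofReal_ne_top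
  have hpointwise : ∀ k ω, μ (Z k ω) {x : Vec d | (Pi k ω).mulVec x ∈ K} ≤
      c * ENNReal.ofReal (opNorm (Pi k ω) ^ α) := fun k ω => by
    have hcard : (1 : ℝ≥0∞) ≤ Fintype.card D :=
      Nat.one_le_cast.2 (Fintype.card_pos_iff.2 ⟨Z k ω⟩)
    calc μ (Z k ω) {x : Vec d | (Pi k ω).mulVec x ∈ K}
        ≤ ENNReal.ofReal (C * sInf (norm '' K) ^ (-α)) *
            ENNReal.ofReal (opNorm (Pi k ω) ^ α) :=
          measure_preimage_le_of_tail_bound _ (hμ _) _ hεK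
      _ ≤ c * ENNReal.ofReal (opNorm (Pi k ω) ^ α) := by
          gcongr
          exact le_mul_of_one_le_left zero_le hcard
  refine ⟨?_, mul_lt_top hc.lt_top hsum⟩
  rw [← ENNReal.tsum_mul_left]
  refine ENNReal.tsum_le_tsum fun k => ?_
  rw [← lintegral_const_mul' _ _ hc]
  exact lintegral_mono (hpointwise k)

/-- If each `μᵢ` satisfies `μᵢ{‖x‖ ≥ s} ≤ C s^{-α}` and
`Σ_k E‖Π_k‖^α < ∞`, then for every Borel `K` with `ε_K := inf{‖x‖ : x ∈ K} > 0`,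
`Σ_k E(μ_{Z_k}{x : Π_k x ∈ K}) ≤ |D| C ε_K^{-α} Σ_k E‖Π_k‖^α < ∞`. -/
theorem stmt8 {Ω : Type*} [MeasurableSpace Ω] (P : Measure Ω) [IsProbabilityMeasure P]
    {d : ℕ} (hd : 1 ≤ d)
    {D : Type*} [Fintype D] [MeasurableSpace D] [MeasurableSingletonClass D]
    (α C : ℝ) (hα : 0 < α) (hC : 0 < C)
    (μ : D → Measure (Vec d))
    (hμ : ∀ i : D, ∀ s : ℝ, 0 < s → μ i {x : Vec d | s ≤ ‖x‖} ≤ ENNReal.ofReal (C * s ^ (-α)))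
    (Z : ℕ → Ω → D) (Pi : ℕ → Ω → Mat d)
    (hZ : ∀ k, Measurable (Z k)) (hPi : ∀ k, Measurable (Pi k))
    (hsum : ∑' k : ℕ, ∫⁻ ω, ENNReal.ofReal (opNorm (Pi k ω) ^ α) ∂P < ⊤)
    (K : Set (Vec d)) (hK : MeasurableSet K)
    (hεK : 0 < sInf (norm '' K)) :
    (∑' k : ℕ, ∫⁻ ω, μ (Z k ω) {x : Vec d | (Pi k ω).mulVec x ∈ K} ∂P ≤
      (Fintype.card D : ℝ≥0∞) * ENNReal.ofReal (C * sInf (norm '' K) ^ (-α)) *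
        ∑' k : ℕ, ∫⁻ ω, ENNReal.ofReal (opNorm (Pi k ω) ^ α) ∂P) ∧
    (Fintype.card D : ℝ≥0∞) * ENNReal.ofReal (C * sInf (norm '' K) ^ (-α)) *
        (∑' k : ℕ, ∫⁻ ω, ENNReal.ofReal (opNorm (Pi k ω) ^ α) ∂P) < ⊤ :=
  stmt8_general P α C μ hμ Z Pi hsum K hεK
end
end

section
/- Let Y, Q be random vectors in ℝ^d and Π a random d×d matrix such that (i) Q is independent of the pair (Y, Π); (ii) for some α > 0 and regularly varying a of index 1/α, Y and Q are regularly varying with index α and normalizing function a; (iii) E‖Π‖^β < ∞ for some β > α. Then for every t > 0 and δ > 0: lim_{n→∞} n P( ‖Y‖ > t a_n and ( Y + ΠQ = 0 or ‖ Y/‖Y‖ − (Y+ΠQ)/‖Y+ΠQ‖ ‖ > δ ) ) = 0. -/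
open MeasureTheory ProbabilityTheory Filter Topology ENNReal

noncomputable section

/-! Moving `Y` by `z = ΠQ` turns its direction by at most `2‖z‖/‖Y‖`, so on the event
`‖Π‖ ‖Q‖ ≥ ‖ΠQ‖ ≥ min(1, δ/2) ‖Y‖ > min(1, δ/2) t aₙ`. Fix `α < γ < β`. By Markov,
`n P(‖Π‖ > n^{1/γ}) ≤ n^{1-β/γ} E‖Π‖^β → 0`. On `‖Π‖ ≤ n^{1/γ}` we need `‖Q‖ ≥ cₙ` with
`cₙ ≍ aₙ / n^{1/γ} → ∞` (the uniform convergence theorem for slowly varying functions gives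
`aₙ ≫ n^{1/γ}`), and independence of `Q` from `(Y, Π)` bounds `n` times this part by
`n P(‖Y‖ > t aₙ) P(‖Q‖ ≥ cₙ)`, whose first factor stays bounded by regular variation of `Y`. -/

open Set

section UniformConvergence

variable {h : ℝ → ℝ}

lemma exists_mem_sub_mem_of_two_lt_volume {E F : Set ℝ} (hE : E ⊆ Icc 0 3) (hF : F ⊆ Icc 0 3)
    (hFm : MeasurableSet F) (hEv : 2 < volume E) (hFv : 2 < volume F) {u : ℝ}
    (hu : u ∈ Icc (0 : ℝ) 1) : ∃ v ∈ E, v - u ∈ F := by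
  by_contra! hdisj
  set B := (fun v => v - u) ⁻¹' F
  have hBv : volume B = volume F := by simp [B, sub_eq_add_neg]
  have hsub : E ∪ B ⊆ Icc 0 4 := union_subset (hE.trans (Icc_subset_Icc le_rfl (by norm_num)))
    fun v hv => ⟨by linarith [(hF hv).1, hu.1], by linarith [(hF hv).2, hu.2]⟩
  have hle : volume E + volume F ≤ 4 := by
    have hBm : MeasurableSet B := hFm.preimage (measurable_sub_const u)
    rw [← hBv, ← measure_union (disjoint_left.2 hdisj : Disjoint E B) hBm]
    exact (measure_mono hsub).trans (by simp [Real.volume_Icc])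
  have h4 : (2 : ℝ≥0∞) + 2 = 4 := by norm_num
  exact (h4 ▸ ENNReal.add_lt_add hEv hFv).not_ge hle

lemma eventually_exists_two_lt_volume_abs_sub_lt (hm : Measurable h)
    (H : ∀ u, Tendsto (fun x => h (x + u) - h x) atTop (𝓝 0)) {y : ℕ → ℝ}
    (hy : Tendsto y atTop atTop) {ε : ℝ} (hε : 0 < ε) :
    ∀ᶠ N in atTop, ∃ E ⊆ Icc (0 : ℝ) 3, MeasurableSet E ∧ 2 < volume E ∧
      ∀ v ∈ E, |h (y N + v) - h (y N)| < ε := by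
  set E : ℕ → Set ℝ := fun N => Icc 0 3 ∩ ⋂ m ≥ N, {v | |h (y m + v) - h (y m)| < ε}
  have hEm : ∀ N, MeasurableSet (E N) := fun N =>
    measurableSet_Icc.inter (MeasurableSet.biInter (to_countable _) fun m _ =>
      measurableSet_lt (by fun_prop) measurable_const)
  have hmono : Monotone E := fun N N' hNN' v hv =>
    ⟨hv.1, mem_iInter₂.2 fun m hm => mem_iInter₂.1 hv.2 m (hNN'.trans hm)⟩
  have hcover : ⋃ N, E N = Icc 0 3 := by
    refine Subset.antisymm (iUnion_subset fun N => inter_subset_left) fun v hv => ?_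
    have hsmall := ((H v).comp hy).abs.eventually (gt_mem_nhds (by simpa using hε))
    obtain ⟨N, hN⟩ := eventually_atTop.1 hsmall
    exact mem_iUnion.2 ⟨N, hv, mem_iInter₂.2 hN⟩
  have hvol := tendsto_measure_iUnion_atTop (μ := volume) hmono
  rw [hcover, Real.volume_Icc] at hvol
  filter_upwards [hvol.eventually (lt_mem_nhds (by norm_num : (2 : ℝ≥0∞) < ENNReal.ofReal (3 - 0)))]
    with N hN
  exact ⟨E N, inter_subset_left, hEm N, hN, fun v hv => mem_iInter₂.1 hv.2 N le_rfl⟩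

-- The uniform convergence theorem for slowly varying functions, in additive form.
theorem eventually_forall_abs_sub_le_of_tendsto_sub (hm : Measurable h)
    (H : ∀ u, Tendsto (fun x => h (x + u) - h x) atTop (𝓝 0)) {ε : ℝ} (hε : 0 < ε) :
    ∀ᶠ x in atTop, ∀ u ∈ Icc (0 : ℝ) 1, |h (x + u) - h x| ≤ ε := by
  by_contra hcon
  obtain ⟨x, hx, u, hu, hgt⟩ : ∃ x : ℕ → ℝ, Tendsto x atTop atTop ∧ ∃ u : ℕ → ℝ,
      (∀ n, u n ∈ Icc (0 : ℝ) 1) ∧ ∀ n, ε < |h (x n + u n) - h (x n)| := by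
    have := fun n : ℕ => frequently_atTop.1 (not_eventually.1 hcon) n
    simp only [not_forall, not_le, exists_prop] at this
    choose x hxn u hu hgt using this
    exact ⟨x, tendsto_atTop_mono hxn tendsto_natCast_atTop_atTop, u, hu, hgt⟩
  have hxu : Tendsto (fun n => x n + u n) atTop atTop :=
    tendsto_atTop_mono (fun n => by linarith [(hu n).1]) hx
  obtain ⟨N, ⟨E, hE, -, hEv, hEh⟩, ⟨F, hF, hFm, hFv, hFh⟩⟩ :=
    ((eventually_exists_two_lt_volume_abs_sub_lt hm H hx (half_pos hε)).and
      (eventually_exists_two_lt_volume_abs_sub_lt hm H hxu (half_pos hε))).exists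
  -- a common shift `v` compares both `h (x N)` and `h (x N + u N)` with `h (x N + v)`
  obtain ⟨v, hvE, hvF⟩ := exists_mem_sub_mem_of_two_lt_volume hE hF hFm hEv hFv (hu N)
  have h₁ := abs_lt.1 (hEh v hvE)
  have h₂ := abs_lt.1 (hFh _ hvF)
  rw [show x N + u N + (v - u N) = x N + v by ring] at h₂
  rcases lt_abs.1 (hgt N) with h₃ | h₃ <;> linarith

lemma sub_mul_le_of_forall_abs_sub_le {X₀ ε : ℝ} (hε : 0 ≤ ε)
    (hX₀ : ∀ x ≥ X₀, ∀ u ∈ Icc (0 : ℝ) 1, |h (x + u) - h x| ≤ ε) {y : ℝ} (hy : X₀ ≤ y) :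
    h X₀ - ε * (y - X₀ + 1) ≤ h y := by
  have step : ∀ x ≥ X₀, ∀ u ∈ Icc (0 : ℝ) 1, h x - ε ≤ h (x + u) := fun x hx u hu => by
    linarith [(abs_le.1 (hX₀ x hx u hu)).1]
  have key : ∀ k : ℕ, ∀ y ∈ Icc X₀ (X₀ + k + 1), h X₀ - ε * (k + 1) ≤ h y := by
    intro k
    induction k with
    | zero =>
      intro y hy
      push_cast at hy
      simpa using step X₀ le_rfl (y - X₀) ⟨by linarith [hy.1], by linarith [hy.2]⟩
    | succ k ih =>
      intro y hy
      push_cast at hy ⊢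
      by_cases hyk : y ≤ X₀ + k + 1
      · nlinarith [ih y ⟨hy.1, hyk⟩]
      · have := ih (y - 1) ⟨by linarith [hy.1, hy.2], by linarith [hy.1, hy.2]⟩
        have := step (y - 1) (by linarith) 1 ⟨zero_le_one, le_rfl⟩
        simp only [sub_add_cancel] at this
        linarith
  have hk := Nat.lt_floor_add_one (y - X₀)
  have hk' := Nat.floor_le (sub_nonneg.2 hy)
  nlinarith [key ⌊y - X₀⌋₊ y ⟨hy, by linarith⟩]

theorem tendsto_mul_add_atTop_of_tendsto_sub (hm : Measurable h)
    (H : ∀ u, Tendsto (fun x => h (x + u) - h x) atTop (𝓝 0)) {σ : ℝ} (hσ : 0 < σ) :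
    Tendsto (fun y => σ * y + h y) atTop atTop := by
  obtain ⟨X₀, hX₀⟩ :=
    eventually_atTop.1 (eventually_forall_abs_sub_le_of_tendsto_sub hm H (half_pos hσ))
  refine tendsto_atTop_mono' _ ?_ (tendsto_atTop_add_const_right _ (h X₀ - σ / 2 * (1 - X₀))
    (tendsto_id.const_mul_atTop (half_pos hσ)))
  filter_upwards [eventually_ge_atTop X₀] with y hy
  have := sub_mul_le_of_forall_abs_sub_le (half_pos hσ).le hX₀ hy
  simp only [id]
  linarith

end UniformConvergence

theorem tendsto_rpow_mul_atTop_of_slowlyVarying {L : ℝ → ℝ} (hLm : Measurable L)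
    (hpos : ∀ t > 0, 0 < L t) (hsv : ∀ lam > 0, Tendsto (fun t => L (lam * t) / L t) atTop (𝓝 1))
    {σ : ℝ} (hσ : 0 < σ) : Tendsto (fun t : ℝ => t ^ σ * L t) atTop atTop := by
  set h : ℝ → ℝ := fun x => Real.log (L (Real.exp x))
  have H : ∀ u, Tendsto (fun x => h (x + u) - h x) atTop (𝓝 0) := by
    intro u
    have := (Real.continuousAt_log one_ne_zero).tendsto.comp
      ((hsv _ (Real.exp_pos u)).comp Real.tendsto_exp_atTop)
    rw [Real.log_one] at this
    refine this.congr fun x => ?_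
    simp only [Function.comp_apply, h, Real.exp_add, mul_comm (Real.exp x)]
    exact Real.log_div (hpos _ (by positivity)).ne' (hpos _ (Real.exp_pos x)).ne'
  have := Real.tendsto_exp_atTop.comp
    ((tendsto_mul_add_atTop_of_tendsto_sub (by fun_prop) H hσ).comp Real.tendsto_log_atTop)
  refine this.congr' ?_
  filter_upwards [eventually_gt_atTop 0] with t ht
  simp only [Function.comp_apply, h, Real.exp_add, Real.exp_log ht, Real.exp_log (hpos t ht),
    Real.rpow_def_of_pos ht, mul_comm σ]

namespace RegVaryFun

variable {a : ℝ → ℝ} {ρ : ℝ}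

lemma pos (ha : RegVaryFun a ρ) {t : ℝ} (ht : 0 < t) : 0 < a t := by
  obtain ⟨L, -, hpos, -, haL⟩ := ha
  rw [haL t ht]
  exact mul_pos (Real.rpow_pos_of_pos ht _) (hpos t ht)

theorem tendsto_div_rpow_atTop (ha : RegVaryFun a ρ) {σ : ℝ} (hσ : σ < ρ) :
    Tendsto (fun t => a t / t ^ σ) atTop atTop := by
  obtain ⟨L, hLm, hpos, hsv, haL⟩ := ha
  refine (tendsto_rpow_mul_atTop_of_slowlyVarying hLm hpos hsv (sub_pos.2 hσ)).congr' ?_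
  filter_upwards [eventually_gt_atTop 0] with t ht
  rw [haL t ht, Real.rpow_sub ht]
  field_simp

end RegVaryFun

section Directions

variable {E : Type*} [NormedAddCommGroup E] [NormedSpace ℝ E]

lemma norm_inv_norm_smul_sub_inv_norm_smul_le {x : E} (hx : x ≠ 0) (y : E) :
    ‖‖x‖⁻¹ • x - ‖y‖⁻¹ • y‖ ≤ 2 * ‖x - y‖ / ‖x‖ := by
  have hx' : 0 < ‖x‖ := norm_pos_iff.2 hx
  have hsplit : ‖x‖⁻¹ • x - ‖y‖⁻¹ • y = ‖x‖⁻¹ • (x - y) + (‖x‖⁻¹ - ‖y‖⁻¹) • y := by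
    rw [smul_sub, sub_smul]; abel
  have hscale : ‖(‖x‖⁻¹ - ‖y‖⁻¹) • y‖ ≤ ‖x - y‖ / ‖x‖ := by
    rcases eq_or_ne y 0 with rfl | hy
    · simp only [smul_zero, norm_zero]; positivity
    have hy' : 0 < ‖y‖ := norm_pos_iff.2 hy
    rw [norm_smul, Real.norm_eq_abs, show ‖x‖⁻¹ - ‖y‖⁻¹ = (‖y‖ - ‖x‖) / (‖x‖ * ‖y‖) by
      field_simp, abs_div, abs_of_pos (mul_pos hx' hy'), div_mul_eq_mul_div,
      mul_div_mul_right _ _ hy'.ne']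
    gcongr
    rw [abs_sub_comm]
    exact abs_norm_sub_norm_le x y
  calc ‖‖x‖⁻¹ • x - ‖y‖⁻¹ • y‖ ≤ ‖‖x‖⁻¹ • (x - y)‖ + ‖(‖x‖⁻¹ - ‖y‖⁻¹) • y‖ :=
        hsplit ▸ norm_add_le _ _
    _ ≤ ‖x‖⁻¹ * ‖x - y‖ + ‖x - y‖ / ‖x‖ := by
        rw [norm_smul, Real.norm_eq_abs, abs_of_pos (inv_pos.2 hx')]
        gcongr
    _ = 2 * ‖x - y‖ / ‖x‖ := by ring

lemma min_one_half_mul_norm_le_norm {x z : E} {δ : ℝ}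
    (h : x + z = 0 ∨ δ < ‖‖x‖⁻¹ • x - ‖x + z‖⁻¹ • (x + z)‖) : min 1 (δ / 2) * ‖x‖ ≤ ‖z‖ := by
  rcases eq_or_ne x 0 with rfl | hx
  · simp
  rcases h with h | h
  · rw [← neg_eq_of_add_eq_zero_right h, norm_neg]
    exact mul_le_of_le_one_left (norm_nonneg x) (min_le_left _ _)
  · have := h.trans_le (norm_inv_norm_smul_sub_inv_norm_smul_le hx (x + z))
    rw [sub_add_cancel_left, norm_neg, lt_div_iff₀ (norm_pos_iff.2 hx)] at this
    nlinarith [min_le_right 1 (δ / 2), norm_nonneg x]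

end Directions

instance {d : ℕ} : BorelSpace (Mat d) :=
  ⟨(Pi.borelSpace (X := fun _ : Fin d => Fin d → ℝ)).measurable_eq⟩

lemma norm_mulVec_le_opNorm_mul {d : ℕ} (M : Mat d) (v : Vec d) :
    ‖M.mulVec v‖ ≤ opNorm M * ‖v‖ :=
  (LinearMap.toContinuousLinearMap M.mulVecLin).le_opNorm v

lemma continuous_opNorm {d : ℕ} : Continuous (opNorm (d := d)) := by
  let Φ : Mat d →ₗ[ℝ] Vec d →L[ℝ] Vec d :=
    LinearMap.toContinuousLinearMap.toLinearMap ∘ₗ Matrix.toLin'.toLinearMap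
  exact continuous_norm.comp Φ.continuous_of_finiteDimensional

lemma exists_mem_Ioo_measure_norm_eq_zero {E : Type*} [NormedAddCommGroup E] [MeasurableSpace E]
    [OpensMeasurableSpace E] (ν : Measure E) {a b : ℝ} (hfin : ν {x | a ≤ ‖x‖} ≠ ⊤)
    (hab : a < b) : ∃ r ∈ Ioo a b, ν {x | ‖x‖ = r} = 0 := by
  have : IsFiniteMeasure (ν.restrict {x | a ≤ ‖x‖}) := isFiniteMeasure_restrict.2 hfin
  obtain ⟨r, hr, hrab⟩ :=
    ((Measure.countable_meas_level_set_pos (μ := ν.restrict {x | a ≤ ‖x‖})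
      (measurable_norm : Measurable fun x : E => ‖x‖)).dense_compl ℝ).exists_between hab
  refine ⟨r, hrab, ?_⟩
  have hsub : {x : E | ‖x‖ = r} ⊆ {x | a ≤ ‖x‖} := fun x (hx : ‖x‖ = r) =>
    show a ≤ ‖x‖ from hx ▸ hrab.1.le
  rw [← Measure.restrict_eq_self ν hsub]
  simpa using hr

section Tails

variable {Ω : Type*} [MeasurableSpace Ω] {P : Measure Ω}

lemma tendsto_measureReal_le_atTop [IsFiniteMeasure P] {W : Ω → ℝ} (hW : Measurable W) :
    Tendsto (fun c : ℝ => P.real {ω | c ≤ W ω}) atTop (𝓝 0) := by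
  have hanti : Antitone fun c : ℝ => {ω | c ≤ W ω} := fun c c' hcc' ω hω => hcc'.trans hω
  have hempty : ⋂ c : ℝ, {ω | c ≤ W ω} = ∅ :=
    eq_empty_of_forall_notMem fun ω hω => (lt_add_one (W ω)).not_ge (mem_iInter.1 hω (W ω + 1))
  have := tendsto_measure_iInter_atTop (μ := P)
    (fun c => (measurableSet_le measurable_const hW).nullMeasurableSet) hanti
    ⟨0, measure_ne_top P _⟩
  rw [hempty, measure_empty] at this
  exact (ENNReal.tendsto_toReal ENNReal.zero_ne_top).comp this

lemma tendsto_natCast_mul_measureReal_rpow_lt {V : Ω → ℝ} {β γ : ℝ} (hV : AEMeasurable V P)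
    (hmom : ∫⁻ ω, ENNReal.ofReal (V ω ^ β) ∂P < ⊤) (hγ : 0 < γ) (hγβ : γ < β) :
    Tendsto (fun n : ℕ => n * P.real {ω | (n : ℝ) ^ (1 / γ) < V ω}) atTop (𝓝 0) := by
  set I := ∫⁻ ω, ENNReal.ofReal (V ω ^ β) ∂P
  have hexp : 0 < β / γ - 1 := by rw [sub_pos, one_lt_div hγ]; exact hγβ
  have hlim : Tendsto (fun n : ℕ => I.toReal * (n : ℝ) ^ (-(β / γ - 1))) atTop (𝓝 0) := by
    simpa using ((tendsto_rpow_neg_atTop hexp).comp tendsto_natCast_atTop_atTop).const_mul I.toReal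
  refine squeeze_zero' (Eventually.of_forall fun n => by positivity) ?_ hlim
  filter_upwards [eventually_gt_atTop 0] with n hn
  have hn' : (0 : ℝ) < n := Nat.cast_pos.2 hn
  have hr : 0 < ((n : ℝ) ^ (1 / γ)) ^ β := by positivity
  have hmarkov : P {ω | (n : ℝ) ^ (1 / γ) < V ω} ≤ I / ENNReal.ofReal (((n : ℝ) ^ (1 / γ)) ^ β) :=
    (measure_mono fun ω (hω : _ < V ω) => ENNReal.ofReal_le_ofReal
      (Real.rpow_le_rpow (by positivity) hω.le (by linarith))).trans
      (meas_ge_le_lintegral_div (hV.pow_const β).ennreal_ofReal (by simpa using hr)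
        ENNReal.ofReal_ne_top)
  have := ENNReal.toReal_mono (ENNReal.div_lt_top hmom.ne (by simpa using hr)).ne hmarkov
  rw [ENNReal.toReal_div, ENNReal.toReal_ofReal hr.le, ← Real.rpow_mul hn'.le] at this
  calc n * P.real {ω | (n : ℝ) ^ (1 / γ) < V ω} ≤ n * (I.toReal / (n : ℝ) ^ (1 / γ * β)) := by
        gcongr; exact this
    _ = I.toReal * (n : ℝ) ^ (-(β / γ - 1)) := by
        rw [Real.rpow_neg hn'.le, Real.rpow_sub hn', Real.rpow_one, one_div_mul_eq_div]
        field_simp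

theorem tendsto_natCast_mul_measureReal_lt_and_lt_mul [IsFiniteMeasure P] {U V W : Ω → ℝ}
    {s b : ℕ → ℝ} {C β γ : ℝ} (hV : AEMeasurable V P) (hW : Measurable W) (hW0 : ∀ ω, 0 ≤ W ω)
    (hindep : IndepFun W (fun ω => (U ω, V ω)) P)
    (hU : ∀ᶠ n : ℕ in atTop, n * P.real {ω | s n < U ω} ≤ C)
    (hmom : ∫⁻ ω, ENNReal.ofReal (V ω ^ β) ∂P < ⊤) (hγ : 0 < γ) (hγβ : γ < β)
    (hb : Tendsto (fun n : ℕ => b n / (n : ℝ) ^ (1 / γ)) atTop atTop) :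
    Tendsto (fun n : ℕ => n * P.real {ω | s n < U ω ∧ b n < V ω * W ω}) atTop (𝓝 0) := by
  have hlim : Tendsto (fun n : ℕ => n * P.real {ω | (n : ℝ) ^ (1 / γ) < V ω} +
      P.real {ω | b n / (n : ℝ) ^ (1 / γ) ≤ W ω} * C) atTop (𝓝 0) := by
    simpa using (tendsto_natCast_mul_measureReal_rpow_lt hV hmom hγ hγβ).add
      (((tendsto_measureReal_le_atTop hW).comp hb).mul_const C)
  refine squeeze_zero' (Eventually.of_forall fun n => by positivity) ?_ hlim
  filter_upwards [hU, eventually_gt_atTop 0] with n hUn hn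
  set r := (n : ℝ) ^ (1 / γ)
  have hr : 0 < r := by positivity
  -- on `{V ≤ r}`, a large product `V W` forces a large `W`, which is independent of `U`
  have hsub : {ω | s n < U ω ∧ b n < V ω * W ω} ⊆ {ω | r < V ω} ∪
      (W ⁻¹' Ici (b n / r) ∩ (fun ω => (U ω, V ω)) ⁻¹' (Ioi (s n) ×ˢ univ)) := by
    rintro ω ⟨hUω, hbω⟩
    by_cases hVω : r < V ω
    · exact Or.inl hVω
    · refine Or.inr ⟨?_, hUω, trivial⟩
      rw [mem_preimage, mem_Ici, div_le_iff₀ hr]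
      nlinarith [hW0 ω]
  have hprod : P.real (W ⁻¹' Ici (b n / r) ∩ (fun ω => (U ω, V ω)) ⁻¹' (Ioi (s n) ×ˢ univ)) =
      P.real {ω | b n / r ≤ W ω} * P.real {ω | s n < U ω} := by
    rw [measureReal_def, hindep.measure_inter_preimage_eq_mul _ _ measurableSet_Ici
      (measurableSet_Ioi.prod MeasurableSet.univ), ENNReal.toReal_mul]
    simp [measureReal_def, preimage]
  calc n * P.real {ω | s n < U ω ∧ b n < V ω * W ω}
      ≤ n * (P.real {ω | r < V ω} + P.real {ω | b n / r ≤ W ω} * P.real {ω | s n < U ω}) := by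
        gcongr
        rw [← hprod]
        exact (measureReal_mono hsub).trans (measureReal_union_le _ _)
    _ = n * P.real {ω | r < V ω} + P.real {ω | b n / r ≤ W ω} * (n * P.real {ω | s n < U ω}) := by
        ring
    _ ≤ n * P.real {ω | r < V ω} + P.real {ω | b n / r ≤ W ω} * C := by gcongr

end Tails

namespace IsRegVar

variable {Ω : Type*} [MeasurableSpace Ω] {P : Measure Ω} {d : ℕ} {X : Ω → Vec d} {α : ℝ}
  {a : ℝ → ℝ} {ν : Measure (Vec d)}

lemma exists_eventually_natCast_mul_measureReal_le (hX : IsRegVar P X α a ν) [IsFiniteMeasure P]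
    {t : ℝ} (ht : 0 < t) : ∃ C, ∀ᶠ n : ℕ in atTop, n * P.real {ω | t * a n < ‖X ω‖} ≤ C := by
  obtain ⟨-, ha, hfin, hconv⟩ := hX
  have hclosed : IsClosed {x : Vec d | t / 2 ≤ ‖x‖} := isClosed_le continuous_const continuous_norm
  have h0 : (0 : Vec d) ∉ closure {x : Vec d | t / 2 ≤ ‖x‖} := by
    simpa [hclosed.closure_eq] using half_pos ht
  obtain ⟨r, hr, hr0⟩ :=
    exists_mem_Ioo_measure_norm_eq_zero ν (hfin _ hclosed.measurableSet h0).ne (half_lt_self ht)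
  set A := {x : Vec d | r < ‖x‖}
  have hA0 : (0 : Vec d) ∉ closure A := fun h0 => by
    have : r ≤ ‖(0 : Vec d)‖ := closure_lt_subset_le continuous_const continuous_norm h0
    linarith [norm_zero (E := Vec d), hr.1, half_pos ht]
  have hAfr : ν (frontier A) = 0 :=
    measure_mono_null
      (fun x hx => (frontier_lt_subset_eq continuous_const continuous_norm hx).symm) hr0
  obtain ⟨C, hC⟩ :=
    (hconv A (measurableSet_lt measurable_const measurable_norm) hA0 hAfr).bddAbove_range
  refine ⟨C, eventually_atTop.2 ⟨1, fun n hn => le_trans ?_ (hC (mem_range_self n))⟩⟩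
  have han : 0 < a n := ha.pos (by exact_mod_cast hn)
  refine mul_le_mul_of_nonneg_left
    (measureReal_mono fun ω (hω : t * a n < ‖X ω‖) => ?_) n.cast_nonneg
  change r < ‖(a n)⁻¹ • X ω‖
  rw [norm_smul, Real.norm_of_nonneg (inv_nonneg.2 han.le), inv_mul_eq_div, lt_div_iff₀ han]
  exact (mul_lt_mul_of_pos_right hr.2 han).trans hω

end IsRegVar

theorem stmt11_general {Ω : Type*} [MeasurableSpace Ω] (P : Measure Ω) [IsProbabilityMeasure P]
    {d : ℕ}
    (Y Q : Ω → Vec d) (Pmat : Ω → Mat d)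
    (hQm : Measurable Q) (hPm : Measurable Pmat)
    (hindep : IndepFun Q (fun ω => (Y ω, Pmat ω)) P)
    (α : ℝ) (a : ℝ → ℝ) (ν : Measure (Vec d))
    (hY : IsRegVar P Y α a ν)
    (β : ℝ) (hβ : α < β)
    (hmom : ∫⁻ ω, ENNReal.ofReal (opNorm (Pmat ω) ^ β) ∂P < ⊤)
    (t δ : ℝ) (ht : 0 < t) (hδ : 0 < δ) :
    Filter.Tendsto (fun n : ℕ => (n : ℝ) *
        (P {ω | t * a n < ‖Y ω‖ ∧
          (Y ω + (Pmat ω).mulVec (Q ω) = 0 ∨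
            δ < ‖‖Y ω‖⁻¹ • Y ω -
              ‖Y ω + (Pmat ω).mulVec (Q ω)‖⁻¹ • (Y ω + (Pmat ω).mulVec (Q ω))‖)}).toReal)
      Filter.atTop (nhds 0) := by
  obtain ⟨C, hC⟩ := hY.exists_eventually_natCast_mul_measureReal_le ht
  obtain ⟨hα, ha, -⟩ := hY
  obtain ⟨γ, hαγ, hγβ⟩ := exists_between hβ
  have hmin : 0 < min 1 (δ / 2) := lt_min one_pos (half_pos hδ)
  have hb : Tendsto (fun n : ℕ => min 1 (δ / 2) * t * a n / (n : ℝ) ^ (1 / γ)) atTop atTop := by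
    simpa only [mul_div_assoc, Function.comp_def] using ((ha.tendsto_div_rpow_atTop
      (one_div_lt_one_div_of_lt hα hαγ)).const_mul_atTop (mul_pos hmin ht)).comp
      tendsto_natCast_atTop_atTop
  have hindep' : IndepFun (fun ω => ‖Q ω‖) (fun ω => (‖Y ω‖, opNorm (Pmat ω))) P :=
    hindep.comp measurable_norm (measurable_norm.prodMap continuous_opNorm.measurable)
  refine squeeze_zero (fun n => by positivity) (fun n => ?_)
    (tendsto_natCast_mul_measureReal_lt_and_lt_mul
      (continuous_opNorm.measurable.comp hPm).aemeasurable
      hQm.norm (fun ω => norm_nonneg _) hindep' hC hmom (hα.trans hαγ) hγβ hb)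
  refine mul_le_mul_of_nonneg_left (measureReal_mono fun ω ⟨hYω, hdir⟩ => ⟨hYω, ?_⟩) n.cast_nonneg
  calc min 1 (δ / 2) * t * a n = min 1 (δ / 2) * (t * a n) := by ring
    _ < min 1 (δ / 2) * ‖Y ω‖ := by gcongr
    _ ≤ ‖(Pmat ω).mulVec (Q ω)‖ := min_one_half_mul_norm_le_norm hdir
    _ ≤ opNorm (Pmat ω) * ‖Q ω‖ := norm_mulVec_le_opNorm_mul _ _

/-- Under the hypotheses of Lemma 2.1, for every `t > 0` and `δ > 0`,
`n P(‖Y‖ > t aₙ, ‖dir Y − dir(Y+ΠQ)‖ > δ) → 0` (including the degenerate case `Y+ΠQ = 0`). -/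
theorem stmt11 {Ω : Type*} [MeasurableSpace Ω] (P : Measure Ω) [IsProbabilityMeasure P]
    {d : ℕ} (hd : 1 ≤ d)
    (Y Q : Ω → Vec d) (Pmat : Ω → Mat d)
    (hYm : Measurable Y) (hQm : Measurable Q) (hPm : Measurable Pmat)
    (hindep : IndepFun Q (fun ω => (Y ω, Pmat ω)) P)
    (α : ℝ) (a : ℝ → ℝ) (ν μ : Measure (Vec d))
    (hY : IsRegVar P Y α a ν) (hQ : IsRegVar P Q α a μ)
    (β : ℝ) (hβ : α < β)
    (hmom : ∫⁻ ω, ENNReal.ofReal (opNorm (Pmat ω) ^ β) ∂P < ⊤)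
    (t δ : ℝ) (ht : 0 < t) (hδ : 0 < δ) :
    Filter.Tendsto (fun n : ℕ => (n : ℝ) *
        (P {ω | t * a n < ‖Y ω‖ ∧
          (Y ω + (Pmat ω).mulVec (Q ω) = 0 ∨
            δ < ‖‖Y ω‖⁻¹ • Y ω -
              ‖Y ω + (Pmat ω).mulVec (Q ω)‖⁻¹ • (Y ω + (Pmat ω).mulVec (Q ω))‖)}).toReal)
      Filter.atTop (nhds 0) :=
  stmt11_general P Y Q Pmat hQm hPm hindep α a ν hY β hβ hmom t δ ht hδ
end
end
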